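/- arXiv:2205.14914 — 3 statements merged into one kernel-verified Lean document; each statement's English description precedes it below -/
import Mathlib

section
/- Let $K$ be a field of characteristic $0$, $\beta \in K$ nonzero, and $A$ an $l\times l$ matrix over $K$. Define $f_{m,1} = 1$ and $f_{m,i} = \frac{\beta^{i-1}}{i!}(m-1)(m-2)\cdots(m-(i-1))$ for $2 \leq i \leq m$. Then for all $m \geq 1$ and all $s \geq 0$, $\sum_{c=0}^{s-1}\prod_{i=1}^{m-1}(-i\beta + A + c\beta) = \sum_{i=1}^{m} f_{m,i}\,\Big(\prod_{t=1}^{m-i}(-t\beta + A)\Big)\, s(s-1)\cdots(s-i+1)$, where for $m=1$ the left side is interpreted as $s \cdot I$ and empty products are the identity matrix. -/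
open Finset Polynomial

lemma vdm {R : Type*} [CommRing R] (x y b : R) (n : ℕ) :
    ∏ j ∈ range n, (x + (y - ((j : R) + 1)) * b)
      = ∑ k ∈ range (n + 1),
          (n.choose k : R) * (b ^ k * (∏ u ∈ range k, (y - (u : R))) *
            ∏ t ∈ range (n - k), (x - ((t : R) + 1) * b)) := by
  induction n with
  | zero => simp
  | succ n ih =>
    have hrhs : ∑ k ∈ range (n + 2),
          ((n+1).choose k : R) * (b ^ k * (∏ u ∈ range k, (y - (u : R))) *
            ∏ t ∈ range (n + 1 - k), (x - ((t : R) + 1) * b))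
        = ∑ k ∈ range (n + 1),
          (n.choose k : R) * ((b ^ k * (∏ u ∈ range k, (y - (u : R))) *
              ∏ t ∈ range (n + 1 - k), (x - ((t : R) + 1) * b))
            + (b ^ (k+1) * (∏ u ∈ range (k+1), (y - (u : R))) *
              ∏ t ∈ range (n - k), (x - ((t : R) + 1) * b))) := by
      set a : ℕ → R := fun k => b ^ k * (∏ u ∈ range k, (y - (u : R))) *
          ∏ t ∈ range (n + 1 - k), (x - ((t : R) + 1) * b) with ha
      have hak : ∀ k, a (k+1) = b ^ (k+1) * (∏ u ∈ range (k+1), (y - (u : R))) *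
          ∏ t ∈ range (n - k), (x - ((t : R) + 1) * b) := by
        intro k
        have h : n + 1 - (k + 1) = n - k := by omega
        simp only [ha, h]
      calc ∑ k ∈ range (n + 2), ((n+1).choose k : R) * a k
          = (∑ k ∈ range (n + 1), ((n+1).choose (k+1) : R) * a (k+1))
              + ((n+1).choose 0 : R) * a 0 := Finset.sum_range_succ' _ _
        _ = (∑ k ∈ range (n + 1), ((n.choose k : R) * a (k+1) + (n.choose (k+1) : R) * a (k+1)))
              + (n.choose 0 : R) * a 0 := by
            simp [Nat.choose_succ_succ, add_mul]
        _ = (∑ k ∈ range (n + 1), (n.choose k : R) * a (k+1))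
              + ((∑ k ∈ range (n + 1), (n.choose (k+1) : R) * a (k+1))
                  + (n.choose 0 : R) * a 0) := by
            rw [Finset.sum_add_distrib]; ring
        _ = (∑ k ∈ range (n + 1), (n.choose k : R) * a (k+1))
              + ∑ k ∈ range (n + 2), (n.choose k : R) * a k := by
            rw [← Finset.sum_range_succ' (fun k => (n.choose k : R) * a k) (n+1)]
        _ = (∑ k ∈ range (n + 1), (n.choose k : R) * a (k+1))
              + ∑ k ∈ range (n + 1), (n.choose k : R) * a k := by
            rw [Finset.sum_range_succ (fun k => (n.choose k : R) * a k) (n+1), Nat.choose_succ_self]; simp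
        _ = ∑ k ∈ range (n + 1), (n.choose k : R) * (a k + a (k+1)) := by
            rw [← Finset.sum_add_distrib]
            refine Finset.sum_congr rfl fun k _ => by ring
        _ = _ := Finset.sum_congr rfl fun k _ => by rw [hak]
    rw [Finset.prod_range_succ, ih, Finset.sum_mul, hrhs]
    refine Finset.sum_congr rfl fun k hk => ?_
    rw [Finset.mem_range] at hk
    have hnk : n + 1 - k = (n - k) + 1 := by omega
    have hc : ((n - k : ℕ) : R) = (n : R) - (k : R) := by
      push_cast [Nat.cast_sub (by omega : k ≤ n)]; ring
    rw [hnk, Finset.prod_range_succ, Finset.prod_range_succ _ k, hc]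
    push_cast
    ring

-- helper: falling factorial step
lemma Pstep {K : Type*} [Field K] (s : K) (k : ℕ) :
    ∏ u ∈ range (k + 1), (s + 1 - (u : K))
      = ∏ u ∈ range (k + 1), (s - (u : K)) + ((k : K) + 1) * ∏ u ∈ range k, (s - (u : K)) := by
  rw [Finset.prod_range_succ' (fun u => s + 1 - (u : K)), Finset.prod_range_succ (fun u => s - (u : K))]
  have h : ∀ u ∈ range k, s + 1 - ((u + 1 : ℕ) : K) = s - (u : K) := by
    intro u _; push_cast; ring
  rw [Finset.prod_congr rfl h]
  ring

lemma Lf {K : Type*} [Field K] [CharZero K] (β : K) (f : ℕ → ℕ → K)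
    (hf1 : ∀ m, f m 1 = 1)
    (hf : ∀ m i, 2 ≤ i → i ≤ m →
      f m i = β ^ (i - 1) / (Nat.factorial i : K) *
        ∏ t ∈ Finset.Icc 1 (i - 1), ((m : K) - (t : K)))
    (m k : ℕ) (hk : k + 1 ≤ m) :
    f m (k + 1) * ((k : K) + 1) = β ^ k * ((m - 1).choose k : K) := by
  rcases Nat.eq_zero_or_pos k with rfl | hk0
  · simp [hf1]
  · have h2 : 2 ≤ k + 1 := by omega
    rw [hf m (k + 1) h2 hk]
    have hprod : ∏ t ∈ Finset.Icc 1 k, ((m : K) - (t : K))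
        = (((m - 1).descFactorial k : ℕ) : K) := by
      rw [← Finset.Ico_add_one_right_eq_Icc, Finset.prod_Ico_eq_prod_range]
      rw [Nat.descFactorial_eq_prod_range, Nat.cast_prod]
      refine Finset.prod_congr rfl fun i hi => ?_
      rw [Finset.mem_range] at hi
      have h3 : m - 1 - i = m - (1 + i) := by omega
      rw [h3, Nat.cast_sub (by omega)]
      try push_cast
      try ring
    have hd : (((m - 1).descFactorial k : ℕ) : K)
        = (k.factorial : K) * ((m - 1).choose k : K) := by
      rw [Nat.descFactorial_eq_factorial_mul_choose]; push_cast; ring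
    have hfac : ((Nat.factorial (k + 1) : ℕ) : K) = ((k : K) + 1) * (k.factorial : K) := by
      rw [Nat.factorial_succ]; push_cast; ring
    have hkk : ((k : K) + 1) ≠ 0 := by
      have h4 : ((k + 1 : ℕ) : K) ≠ 0 := Nat.cast_ne_zero.2 (by omega)
      push_cast at h4; exact h4
    have hfk : (k.factorial : K) ≠ 0 := Nat.cast_ne_zero.2 k.factorial_ne_zero
    simp only [Nat.add_sub_cancel]
    rw [hprod, hd, hfac]
    field_simp

lemma polyMain {K : Type*} [Field K] [CharZero K] (β : K) (f : ℕ → ℕ → K)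
    (hf1 : ∀ m, f m 1 = 1)
    (hf : ∀ m i, 2 ≤ i → i ≤ m →
      f m i = β ^ (i - 1) / (Nat.factorial i : K) *
        ∏ t ∈ Finset.Icc 1 (i - 1), ((m : K) - (t : K)))
    (m : ℕ) (hm : 1 ≤ m) (s : ℕ) :
    ∑ c ∈ range s, ∏ i ∈ range (m - 1), (X + C (((c : K) - ((i : K) + 1)) * β))
      = ∑ i ∈ Icc 1 m, C (f m i * ∏ u ∈ range i, ((s : K) - (u : K))) *
          ∏ t ∈ range (m - i), (X - C (((t : K) + 1) * β)) := by
  obtain ⟨n, rfl⟩ : ∃ n, m = n + 1 := ⟨m - 1, by omega⟩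
  simp only [Nat.add_sub_cancel]
  induction s with
  | zero =>
    rw [Finset.sum_range_zero]
    symm
    refine Finset.sum_eq_zero fun i hi => ?_
    rw [Finset.mem_Icc] at hi
    have h0 : ∏ u ∈ range i, (((0 : ℕ) : K) - (u : K)) = 0 :=
      Finset.prod_eq_zero (i := 0) (Finset.mem_range.2 (by omega)) (by simp)
    rw [h0, mul_zero, map_zero, zero_mul]
  | succ s ih =>
    rw [Finset.sum_range_succ, ih]
    have hsplit : ∀ i ∈ Icc 1 (n + 1),
        C (f (n + 1) i * ∏ u ∈ range i, (((s + 1 : ℕ) : K) - (u : K))) *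
            ∏ t ∈ range (n + 1 - i), (X - C (((t : K) + 1) * β))
          = C (f (n + 1) i * ∏ u ∈ range i, ((s : K) - (u : K))) *
              ∏ t ∈ range (n + 1 - i), (X - C (((t : K) + 1) * β))
            + C (f (n + 1) i * (i : K) * ∏ u ∈ range (i - 1), ((s : K) - (u : K))) *
              ∏ t ∈ range (n + 1 - i), (X - C (((t : K) + 1) * β)) := by
      intro i hi
      rw [Finset.mem_Icc] at hi
      obtain ⟨k, rfl⟩ : ∃ k, i = k + 1 := ⟨i - 1, by omega⟩
      have hc : ((s + 1 : ℕ) : K) = (s : K) + 1 := by push_cast; ring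
      have hc2 : ((k + 1 : ℕ) : K) = (k : K) + 1 := by push_cast; ring
      rw [hc, Pstep, Nat.add_sub_cancel, hc2, mul_add, ← mul_assoc, map_add, add_mul]
    rw [Finset.sum_congr rfl hsplit, Finset.sum_add_distrib, add_right_inj]
    rw [← Finset.Ico_add_one_right_eq_Icc, Finset.sum_Ico_eq_sum_range]
    simp only [Nat.succ_sub_one, Nat.add_sub_cancel]
    have hterm : ∀ k ∈ range (n + 1),
        C (f (n + 1) (1 + k) * ((1 + k : ℕ) : K) *
              ∏ u ∈ range (1 + k - 1), ((s : K) - (u : K))) *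
            ∏ t ∈ range (n + 1 - (1 + k)), (X - C (((t : K) + 1) * β))
          = ((n.choose k : K[X])) * ((C β) ^ k * (∏ u ∈ range k, (C ((s : ℕ) : K) - ((u : ℕ) : K[X]))) *
              ∏ t ∈ range (n - k), (X - (((t : ℕ) : K[X]) + 1) * C β)) := by
      intro k hk
      rw [Finset.mem_range] at hk
      rw [add_comm 1 k, Nat.add_sub_cancel]
      have h2 : n + 1 - (k + 1) = n - k := by omega
      rw [h2]
      have h3 := Lf β f hf1 hf (n + 1) k (by omega)
      rw [Nat.add_sub_cancel] at h3
      have hc2 : ((k + 1 : ℕ) : K) = (k : K) + 1 := by push_cast; ring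
      rw [hc2, h3]
      simp only [map_mul, map_pow, map_prod, map_sub, map_add, map_one, map_natCast]
      ring
    rw [Finset.sum_congr rfl hterm]
    have hlhs : ∏ i ∈ range n, (X + C (((s : K) - ((i : K) + 1)) * β))
        = ∏ j ∈ range n, (X + (C ((s : ℕ) : K) - (((j : ℕ) : K[X]) + 1)) * C β) := by
      refine Finset.prod_congr rfl fun j _ => ?_
      simp only [map_mul, map_sub, map_add, map_one, map_natCast]
    rw [hlhs, vdm X (C ((s : ℕ) : K)) (C β) n]

lemma bridge {K : Type*} [CommRing K] (l : ℕ) (A : Matrix (Fin l) (Fin l) K) (g : ℕ → K) :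
    ∀ n : ℕ, ((List.range n).map (fun i : ℕ =>
        A + g i • (1 : Matrix (Fin l) (Fin l) K))).prod
      = Polynomial.aeval A (∏ i ∈ Finset.range n, (X + C (g i))) := by
  intro n
  induction n with
  | zero => simp
  | succ n ih =>
    rw [List.range_succ, List.map_append, List.prod_append, ih, Finset.prod_range_succ, map_mul]
    simp [Algebra.algebraMap_eq_smul_one]

/-- Lemma "change m calculation order":
`∑_{c=0}^{s-1} ∏_{i=1}^{m-1} (-iβ + A + cβ)
  = ∑_{i=1}^{m} f_{m,i} (∏_{t=1}^{m-i} (-tβ + A)) · s(s-1)⋯(s-i+1)`,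
with `f_{m,1} = 1` and `f_{m,i} = β^{i-1}/i! · (m-1)⋯(m-(i-1))` for `2 ≤ i ≤ m`.
Products of matrices are taken as ordered (list) products; all factors commute. -/
theorem stmt2 (K : Type*) [Field K] [CharZero K] (l : ℕ) (β : K) (hβ : β ≠ 0)
    (A : Matrix (Fin l) (Fin l) K) (f : ℕ → ℕ → K)
    (hf1 : ∀ m, f m 1 = 1)
    (hf : ∀ m i, 2 ≤ i → i ≤ m →
      f m i = β ^ (i - 1) / (Nat.factorial i : K) *
        ∏ t ∈ Finset.Icc 1 (i - 1), ((m : K) - (t : K))) :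
    ∀ m, 1 ≤ m → ∀ s : ℕ,
      ∑ c ∈ Finset.range s,
        ((List.range (m - 1)).map (fun i : ℕ =>
          A + (((c : K) - ((i : K) + 1)) * β) • (1 : Matrix (Fin l) (Fin l) K))).prod
      = ∑ i ∈ Finset.Icc 1 m,
          (f m i * ∏ u ∈ Finset.range i, ((s : K) - (u : K))) •
            ((List.range (m - i)).map (fun t : ℕ =>
              A + (-(((t : K) + 1) * β)) • (1 : Matrix (Fin l) (Fin l) K))).prod := by
  intro m hm s
  have h1 : ∀ c ∈ Finset.range s,
      ((List.range (m - 1)).map (fun i : ℕ =>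
        A + (((c : K) - ((i : K) + 1)) * β) • (1 : Matrix (Fin l) (Fin l) K))).prod
      = Polynomial.aeval A (∏ i ∈ range (m - 1), (X + C (((c : K) - ((i : K) + 1)) * β))) :=
    fun c _ => bridge l A _ (m - 1)
  rw [Finset.sum_congr rfl h1, ← map_sum, polyMain β f hf1 hf m hm s, map_sum]
  refine Finset.sum_congr rfl fun i hi => ?_
  have h2 : ∏ t ∈ range (m - i), (X - C (((t : K) + 1) * β))
      = ∏ t ∈ range (m - i), (X + C (-(((t : K) + 1) * β))) :=
    Finset.prod_congr rfl fun t _ => by rw [map_neg, ← sub_eq_add_neg]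
  rw [map_mul, Polynomial.aeval_C, h2, ← bridge l A (fun t : ℕ => -(((t : K) + 1) * β)) (m - i),
    ← Algebra.smul_def]
end

section
/- Let $G$ be a group, $R$ a commutative ring with $G$-action, and $W$ an $R$-module with semilinear $G$-action. Let $\tau \in G$ and suppose $x \in W$ satisfies: $x$ is fixed by a subgroup $H$, and the orbit $\{\tau^n x\}$ is finite, so $\tau^{p^n} x = x$ for $n$ large. If $W$ is a $p$-adic Banach space and $\nabla_\tau(x) := \lim_{n \to \infty} \frac{\tau^{p^n}(x) - x}{p^n}$ exists, then $\nabla_\tau(x) = 0$. Conversely, if $x$ lies in the locally analytic vectors and $\nabla_\tau(x) = 0$ (equivalently $\log(\tau)(x) = 0$), then $\tau^{p^n}(x) = \exp(p^n \log \tau)(x) = x$ for $n$ sufficiently large, so the orbit of $x$ under the procyclic group generated by $\tau$ is finite. -/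
/-! Both directions are degenerate cases of the exponential formula: if the orbit of `x` under
`τ^{p^n}` stabilises, the difference quotients are eventually `0`, so their limit is `0`; and if
`D x = 0`, every term of `exp(p^n D)(x)` beyond the constant one vanishes, so `τ^{p^n} x = x`. -/

open Filter Topology

theorem tendsto_smul_sub_zero_of_eventually_eq {𝕜 E : Type*} [Semiring 𝕜] [AddCommGroup E]
    [TopologicalSpace E] [Module 𝕜 E] (c : ℕ → 𝕜) {y : ℕ → E} {x : E}
    (h : ∀ᶠ n in atTop, y n = x) :
    Tendsto (fun n => c n • (y n - x)) atTop (𝓝 0) :=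
  tendsto_const_nhds.congr' <| h.mono fun n hn => by simp [hn]

theorem hasSum_exp_series_apply_of_apply_eq_zero {𝕜 W : Type*} [DivisionSemiring 𝕜]
    [AddCommMonoid W] [TopologicalSpace W] [Module 𝕜 W] {D : Module.End 𝕜 W} {x : W}
    (hDx : D x = 0) (t : 𝕜) :
    HasSum (fun k : ℕ => ((Nat.factorial k : 𝕜))⁻¹ • t ^ k • (D ^ k) x) x := by
  convert hasSum_single 0 fun k hk => ?_ using 1
  · simp
  · rw [Module.End.pow_map_zero_of_le (Nat.one_le_iff_ne_zero.mpr hk) (by simpa using hDx),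
      smul_zero, smul_zero]

/-- In a `p`-adic Banach space `W` with an operator `τ`:
(1) if `τ^{p^n} x = x` for all large `n` and the limit `∇_τ(x) = lim (τ^{p^n}x - x)/p^n`
exists, then that limit is `0`;
(2) conversely, if `x` is locally analytic in the sense that
`τ^{p^n} x = exp(p^n log τ)(x) = ∑_k (p^n)^k/k! · D^k x` (with `D = log τ`) for all `n`,
and `D x = 0`, then `τ^{p^n} x = x` for all large `n`. -/
theorem stmt13 (p : ℕ) [Fact p.Prime] (W : Type*) [NormedAddCommGroup W]
    [NormedSpace ℚ_[p] W] (τ : W → W) (D : Module.End ℚ_[p] W) (x : W) :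
    ((∃ N : ℕ, ∀ n ≥ N, τ^[p ^ n] x = x) →
      ∀ L : W, Filter.Tendsto (fun n : ℕ => ((p : ℚ_[p]) ^ n)⁻¹ • (τ^[p ^ n] x - x))
        Filter.atTop (nhds L) → L = 0) ∧
    ((∀ n : ℕ, HasSum
        (fun k : ℕ => ((Nat.factorial k : ℚ_[p]))⁻¹ • ((p : ℚ_[p]) ^ n) ^ k • (D ^ k) x)
        (τ^[p ^ n] x)) →
      D x = 0 → ∃ N : ℕ, ∀ n ≥ N, τ^[p ^ n] x = x) := by
  refine ⟨fun ⟨N, hN⟩ L hL => ?_, fun hexp hDx => ⟨0, fun n _ => ?_⟩⟩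
  · exact tendsto_nhds_unique hL <|
      tendsto_smul_sub_zero_of_eventually_eq _ (eventually_atTop.mpr ⟨N, hN⟩)
  · exact (hexp n).unique (hasSum_exp_series_apply_of_apply_eq_zero hDx _)
end

section
/- Let $K$ be a field of characteristic zero, $\beta \in K^\times$, and let $A_{0,1} \in M_l(K)$. Let $S = \{m \in \mathbb{Z}_{\geq 0} : A_{0,1} - m\beta \text{ is not invertible}\}$ and let $q = \sum_{m \in S} \dim_K \ker(A_{0,1} - m\beta)$. Consider the $K$-vector space $V$ of sequences $(B_0, B_1, B_2, \ldots)$ in $K^l$ satisfying $(A_{0,1} - m\beta)B_m = \sum_{p=0}^{m-1}(p\,\theta_{1,m-p} - A_{m-p,1})B_p$ for all $m \geq 0$ (for fixed matrices $A_{j,1}$ and scalars $\theta_{1,j}$). Then $\dim_K V \leq q$. In particular $\dim_K V \leq l$ if all nontrivial kernels have total dimension at most $l$. -/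
open Finset Module LinearMap

section Aux

variable {K : Type*} [Field K] {l : ℕ} (β : K) (A01 : Matrix (Fin l) (Fin l) K)
  (Aj : ℕ → Matrix (Fin l) (Fin l) K) (θ : ℕ → K)

/-- The matrix `A_{0,1} - mβ`. -/
abbrev Mm (m : ℕ) : Matrix (Fin l) (Fin l) K := A01 - ((m : K) * β) • 1

/-- Being a solution of the recurrence. -/
def IsSol (B : ℕ → Fin l → K) : Prop :=
  ∀ m, (Mm β A01 m).mulVec (B m)
      = ∑ p ∈ Finset.range m, (((p : K) * θ (m - p)) • B p - (Aj (m - p)).mulVec (B p))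

lemma isSol_comb {n : ℕ} (Bs : Fin n → ℕ → Fin l → K)
    (h : ∀ j, IsSol β A01 Aj θ (Bs j)) (c : Fin n → K) :
    IsSol β A01 Aj θ (fun m => ∑ j, c j • Bs j m) := by
  intro m
  have hl : (Mm β A01 m).mulVec (∑ j, c j • Bs j m)
      = ∑ j, c j • (Mm β A01 m).mulVec (Bs j m) := by
    simp [Matrix.mulVec_sum, Matrix.mulVec_smul]
  rw [hl]
  have : ∀ j, c j • (Mm β A01 m).mulVec (Bs j m)
      = ∑ p ∈ Finset.range m,
        (c j • (((p : K) * θ (m - p)) • Bs j p) - c j • (Aj (m - p)).mulVec (Bs j p)) := by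
    intro j
    rw [h j m, Finset.smul_sum]
    exact Finset.sum_congr rfl fun p _ => smul_sub _ _ _
  simp_rw [this]
  rw [Finset.sum_comm]
  refine Finset.sum_congr rfl fun p _ => ?_
  rw [Finset.sum_sub_distrib]
  congr 1
  · rw [Finset.smul_sum]
    exact Finset.sum_congr rfl fun j _ => (smul_comm _ _ _)
  · simp [Matrix.mulVec_sum, Matrix.mulVec_smul]

lemma mulVec_eq_zero {M : Matrix (Fin l) (Fin l) K} (hM : IsUnit M) {v : Fin l → K}
    (hv : M.mulVec v = 0) : v = 0 :=
  Matrix.eq_zero_of_mulVec_eq_zero ((Matrix.isUnit_iff_isUnit_det M).mp hM).ne_zero hv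

/-- If a solution vanishes at every non-invertible index `< t`, it vanishes below `t`. -/
lemma zero_below {B : ℕ → Fin l → K} (hB : IsSol β A01 Aj θ B) (t : ℕ)
    (h : ∀ m < t, ¬ IsUnit (Mm β A01 m) → B m = 0) :
    ∀ m < t, B m = 0 := by
  intro m
  induction m using Nat.strong_induction_on with
  | _ m ih =>
    intro hm
    by_cases hu : IsUnit (Mm β A01 m)
    · refine mulVec_eq_zero hu ?_
      rw [hB m]
      refine Finset.sum_eq_zero fun p hp => ?_
      have hp' := Finset.mem_range.mp hp
      rw [ih p hp' (hp'.trans hm)]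
      simp
    · exact h m hm hu

end Aux

section Main

variable {K : Type*} [Field K] {l : ℕ} (β : K) (A01 : Matrix (Fin l) (Fin l) K)
  (Aj : ℕ → Matrix (Fin l) (Fin l) K) (θ : ℕ → K)

lemma main_aux : ∀ (k : ℕ) (S : Finset ℕ), S.card = k → ∀ (n : ℕ)
    (Bs : Fin n → ℕ → Fin l → K), (∀ j, IsSol β A01 Aj θ (Bs j)) →
    (∀ j m, m ∉ S → ¬ IsUnit (Mm β A01 m) → Bs j m = 0) →
    LinearIndependent K Bs →
    n ≤ ∑ m ∈ S, finrank K (LinearMap.ker (Mm β A01 m).mulVecLin) := by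
  intro k
  induction k with
  | zero =>
    intro S hScard n Bs hsol hvan hli
    have hS : S = ∅ := Finset.card_eq_zero.mp hScard
    subst hS
    -- every Bs j is zero
    by_contra hn
    push_neg at hn
    simp only [Finset.sum_empty] at hn ⊢
    have hpos : 0 < n := by omega
    have hz : Bs ⟨0, hpos⟩ = 0 := by
      funext m
      exact zero_below β A01 Aj θ (hsol _) (m+1)
        (fun p _ hu => hvan _ p (by simp) hu) m (Nat.lt_succ_self m)
    exact hli.ne_zero ⟨0, hpos⟩ hz
  | succ k ih =>
    intro S hScard n Bs hsol hvan hli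
    have hne : S.Nonempty := Finset.card_pos.mp (by omega)
    set m₁ := S.min' hne with hm₁
    -- the evaluation map at m₁
    have hsolc : ∀ c : Fin n → K, IsSol β A01 Aj θ (fun m => ∑ j, c j • Bs j m) :=
      fun c => isSol_comb β A01 Aj θ Bs hsol c
    -- any combination vanishes below m₁
    have hbelow : ∀ (c : Fin n → K), ∀ p < m₁, (∑ j, c j • Bs j p) = 0 := by
      intro c p hp
      have := zero_below β A01 Aj θ (hsolc c) m₁
        (fun m hm hu => by
          have hmS : m ∉ S := fun hmem => absurd (S.min'_le m hmem) (by omega)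
          funext x
          simp only [Finset.sum_apply, Pi.smul_apply]
          refine Finset.sum_eq_zero fun j _ => ?_
          rw [hvan j m hmS hu]; simp) p hp
      have := congrFun this
      funext x
      simpa using this x
    -- combination value at m₁ lies in the kernel
    have hker : ∀ c : Fin n → K,
        (∑ j, c j • Bs j m₁) ∈ LinearMap.ker (Mm β A01 m₁).mulVecLin := by
      intro c
      rw [LinearMap.mem_ker]
      have h1 := hsolc c m₁
      simp only at h1
      have h2 : (Mm β A01 m₁).mulVec (∑ j, c j • Bs j m₁) = 0 := by
        rw [h1]
        refine Finset.sum_eq_zero fun p hp => ?_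
        have hz := hbelow c p (Finset.mem_range.mp hp)
        rw [hz]
        simp
      simpa only [Matrix.mulVecLin_apply] using h2
    let φ : (Fin n → K) →ₗ[K] ↥(LinearMap.ker (Mm β A01 m₁).mulVecLin) :=
      { toFun := fun c => ⟨∑ j, c j • Bs j m₁, hker c⟩
        map_add' := by
          intro c d
          ext x
          simp [add_smul, Finset.sum_add_distrib]
        map_smul' := by
          intro a c
          ext x
          simp [Finset.mul_sum, mul_assoc] }
    have hrank : n = finrank K (LinearMap.ker φ) + finrank K (LinearMap.range φ) := by
      have h := LinearMap.finrank_range_add_finrank_ker φ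
      have hd : finrank K (Fin n → K) = n := by simp
      omega
    have hrange : finrank K (LinearMap.range φ)
        ≤ finrank K (LinearMap.ker (Mm β A01 m₁).mulVecLin) := by
      exact (Submodule.finrank_le _)
    set n' := finrank K (LinearMap.ker φ) with hn'
    -- basis of ker φ
    let b := Module.finBasis K ↥(LinearMap.ker φ)
    rw [hn'] at hrank
    -- new family
    let Cs : Fin n' → ℕ → Fin l → K := fun i m => ∑ j, ((b i : Fin n → K) j) • Bs j m
    have hCsol : ∀ i, IsSol β A01 Aj θ (Cs i) := fun i => hsolc _
    have hCvan : ∀ i m, m ∉ S.erase m₁ → ¬ IsUnit (Mm β A01 m) → Cs i m = 0 := by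
      intro i m hm hu
      by_cases hmm : m = m₁
      · subst hmm
        have : φ (b i : Fin n → K) = 0 := (b i).2
        have := congrArg Subtype.val this
        funext x
        exact congrFun this x
      · have hmS : m ∉ S := fun hmem => hm (Finset.mem_erase.mpr ⟨hmm, hmem⟩)
        funext x
        simp only [Cs, Finset.sum_apply, Pi.smul_apply]
        refine Finset.sum_eq_zero fun j _ => ?_
        rw [hvan j m hmS hu]; simp
    have hCli : LinearIndependent K Cs := by
      rw [Fintype.linearIndependent_iff]
      intro g hg
      have hcomb : ∀ j, (∑ i, g i • (b i : Fin n → K)) j = 0 := by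
        have hBs := Fintype.linearIndependent_iff.mp hli (fun j => ∑ i, g i * (b i : Fin n → K) j) ?_
        · intro j
          simpa [Finset.sum_apply, Pi.smul_apply, smul_eq_mul] using hBs j
        · funext m
          funext x
          have h0 := congrFun (congrFun hg m) x
          simp only [Cs, Finset.sum_apply, Pi.smul_apply, Pi.zero_apply, smul_eq_mul,
            Finset.mul_sum, mul_assoc] at h0
          rw [Finset.sum_comm] at h0
          simp only [Finset.sum_apply, Pi.smul_apply, smul_eq_mul, Pi.zero_apply,
            Finset.sum_mul, mul_assoc]
          exact h0
      have : (∑ i, g i • b i : ↥(LinearMap.ker φ)) = 0 := by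
        ext j
        simpa using hcomb j
      have := Fintype.linearIndependent_iff.mp b.linearIndependent g this
      exact this
    have hstep := ih (S.erase m₁) (by rw [Finset.card_erase_of_mem (S.min'_mem hne)]; omega)
      n' Cs hCsol hCvan hCli
    have hsum : ∑ m ∈ S.erase m₁, finrank K (LinearMap.ker (Mm β A01 m).mulVecLin)
        + finrank K (LinearMap.ker (Mm β A01 m₁).mulVecLin)
        = ∑ m ∈ S, finrank K (LinearMap.ker (Mm β A01 m).mulVecLin) :=
      Finset.sum_erase_add S _ (S.min'_mem hne)
    omega

end Main

/-- Dimension bound for the solution space: with `S = {m : A_{0,1} - mβ not invertible}`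
(a finite set) and `q = ∑_{m ∈ S} dim ker(A_{0,1} - mβ)`, any `K`-linearly independent
family of solutions `(B_m)_m` of
`(A_{0,1} - mβ)B_m = ∑_{p<m}(p θ_{1,m-p} - A_{m-p,1})B_p` has size at most `q`. -/
theorem stmt19 (K : Type*) [Field K] [CharZero K] (l : ℕ) (β : K)
    (A01 : Matrix (Fin l) (Fin l) K) (Aj : ℕ → Matrix (Fin l) (Fin l) K) (θ : ℕ → K)
    (S : Finset ℕ)
    (hS : ∀ m : ℕ, m ∈ S ↔ ¬ IsUnit (A01 - ((m : K) * β) • (1 : Matrix (Fin l) (Fin l) K))) :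
    ∀ (n : ℕ) (Bs : Fin n → ℕ → Fin l → K),
      (∀ (j : Fin n) (m : ℕ),
        (A01 - ((m : K) * β) • (1 : Matrix (Fin l) (Fin l) K)).mulVec (Bs j m)
          = ∑ p ∈ Finset.range m,
              (((p : K) * θ (m - p)) • Bs j p - (Aj (m - p)).mulVec (Bs j p))) →
      LinearIndependent K Bs →
      n ≤ ∑ m ∈ S, Module.finrank K
        (LinearMap.ker (A01 - ((m : K) * β) • (1 : Matrix (Fin l) (Fin l) K)).mulVecLin) := by
  intro n Bs hsol hli
  exact main_aux β A01 Aj θ S.card S rfl n Bs (fun j => hsol j)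
    (fun j m hm hu => absurd ((hS m).mpr hu) hm) hli
end
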